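/- arXiv:2501.16839 — 2 statements merged into one kernel-verified Lean document; each statement's English description precedes it below -/
import Mathlib

section
/- Let μ₀, μ₁ ∈ 𝒫₂(ℝ^d), α ∈ Γ(μ₀, μ₁), and let μ_t = (e_t)_# α be the induced curve with induced velocity field v (satisfying v_t μ_t = (e_t)_#[(y-x)α]). Then v is the unique minimizer in L²(ℝ^d, μ_t ×_t Lebesgue_(0,1)) of the flow matching objective u ↦ E_{(t,x,y) ∼ Leb_(0,1) × α}[‖u_t(e_t(x,y)) - (y - x)‖²]. -/
open MeasureTheory

noncomputable def lineInterp {d : ℕ} (t : ℝ)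
    (p : EuclideanSpace ℝ (Fin d) × EuclideanSpace ℝ (Fin d)) : EuclideanSpace ℝ (Fin d) :=
  (1 - t) • p.1 + t • p.2

/-!
Push `Leb|(0,1) ⊗ α` forward along `e : (t, x, y) ↦ (t, e_t(x, y))` to get the glued measure
`μ_t ×_t dt`. The defining identity of `v` says that in `L²(dt ⊗ α)` the residual
`v ∘ e - (y - x)` is orthogonal to `g ∘ e` for every bounded continuous `g`; since these are dense
in `L²(μ_t ×_t dt)`, it is orthogonal to `G ∘ e` for every `G ∈ L²(μ_t ×_t dt)`. Taking `G = u - v`,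
Pythagoras gives `objective u = objective v + ‖u - v‖²`, with the last norm in `L²(μ_t ×_t dt)`.
-/

open scoped RealInnerProductSpace BoundedContinuousFunction

namespace MeasureTheory

variable {X Y E : Type*} [MeasurableSpace Y] [NormedAddCommGroup E]

lemma memLp_two_of_lintegral_ofReal_norm_sq_ne_top {μ : Measure Y} {f : Y → E}
    (hf : AEStronglyMeasurable f μ) (h : ∫⁻ y, ENNReal.ofReal (‖f y‖ ^ 2) ∂μ ≠ ⊤) :
    MemLp f 2 μ :=
  (memLp_two_iff_integrable_sq_norm hf).2 ⟨hf.norm.pow 2,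
    (hasFiniteIntegral_iff_ofReal (ae_of_all _ fun _ => by positivity)).2 h.lt_top⟩

lemma memLp_two_of_map_eq [MeasurableSpace E] [BorelSpace E] [SecondCountableTopology E]
    {μ : Measure Y} {π : Y → E} (hπ : Measurable π) {ν : Measure E}
    (hν : μ.map π = ν) (hmom : Integrable (fun x => ‖x‖ ^ 2) ν) : MemLp π 2 μ := by
  subst hν
  exact (memLp_map_measure_iff aestronglyMeasurable_id hπ.aemeasurable).1
    ((memLp_two_iff_integrable_sq_norm aestronglyMeasurable_id).2 hmom)

variable [InnerProductSpace ℝ E]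

lemma MemLp.integrable_inner {μ : Measure Y} {f g : Y → E} (hf : MemLp f 2 μ) (hg : MemLp g 2 μ) :
    Integrable (fun y => ⟪f y, g y⟫) μ :=
  (L2.integrable_inner (hf.toLp f) (hg.toLp g)).congr <| by
    filter_upwards [hf.coeFn_toLp, hg.coeFn_toLp] with y hfy hgy
    rw [hfy, hgy]

variable [FiniteDimensional ℝ E] [MetricSpace X] [MeasurableSpace X] [BorelSpace X]

lemma integral_inner_boundedContinuous_eq_of_forall_integral_smul_eq {μ : Measure X}
    [IsFiniteMeasure μ] {ν : Measure Y} [IsFiniteMeasure ν] {e : Y → X} (he : Measurable e) {V : X → E} {W : Y → E}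
    (hV : Integrable V μ) (hW : Integrable W ν)
    (h : ∀ f : X →ᵇ ℝ, ∫ x, f x • V x ∂μ = ∫ y, f (e y) • W y ∂ν) (g : X →ᵇ E) :
    ∫ x, ⟪g x, V x⟫ ∂μ = ∫ y, ⟪g (e y), W y⟫ ∂ν := by
  let b := stdOrthonormalBasis ℝ E
  let c : Fin (Module.finrank ℝ E) → X →ᵇ ℝ := fun i =>
    (innerSL ℝ (b i)).compLeftContinuousBounded X g
  have hc : ∀ i x, c i x = ⟪g x, b i⟫ := fun i x => real_inner_comm _ _
  have hVi : ∀ i, Integrable (fun x => c i x • V x) μ := fun i =>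
    hV.bdd_smul ‖c i‖ (c i).continuous.aestronglyMeasurable
      (ae_of_all _ fun x => (c i).norm_coe_le_norm x)
  have hWi : ∀ i, Integrable (fun y => c i (e y) • W y) ν := fun i =>
    hW.bdd_smul ‖c i‖ ((c i).continuous.measurable.comp he).aestronglyMeasurable
      (ae_of_all _ fun y => (c i).norm_coe_le_norm (e y))
  have hcoord : ∀ i, ∫ x, c i x * ⟪b i, V x⟫ ∂μ = ∫ y, c i (e y) * ⟪b i, W y⟫ ∂ν := by
    intro i
    simp_rw [← real_inner_smul_right]
    rw [integral_inner (hVi i), integral_inner (hWi i), h]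
  have hsum : ∀ u w : E, ∑ i, ⟪u, b i⟫ * ⟪b i, w⟫ = ⟪u, w⟫ := b.sum_inner_mul_inner
  calc ∫ x, ⟪g x, V x⟫ ∂μ = ∫ x, ∑ i, c i x * ⟪b i, V x⟫ ∂μ := by simp_rw [hc, hsum]
    _ = ∑ i, ∫ x, c i x * ⟪b i, V x⟫ ∂μ := integral_finsetSum _ fun i _ => by
        simpa only [real_inner_smul_right] using (hVi i).const_inner (𝕜 := ℝ) (b i)
    _ = ∑ i, ∫ y, c i (e y) * ⟪b i, W y⟫ ∂ν := by simp only [hcoord]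
    _ = ∫ y, ∑ i, c i (e y) * ⟪b i, W y⟫ ∂ν := (integral_finsetSum _ fun i _ => by
        simpa only [real_inner_smul_right] using (hWi i).const_inner (𝕜 := ℝ) (b i)).symm
    _ = ∫ y, ⟪g (e y), W y⟫ ∂ν := by simp_rw [hc, hsum]

lemma integral_inner_eq_of_forall_integral_smul_eq {ν : Measure Y} [IsFiniteMeasure ν]
    {e : Y → X} (he : Measurable e) {V : X → E} {W : Y → E}
    (hV : MemLp V 2 (ν.map e)) (hW : MemLp W 2 ν)
    (h : ∀ f : X →ᵇ ℝ, ∫ x, f x • V x ∂(ν.map e) = ∫ y, f (e y) • W y ∂ν)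
    {G : X → E} (hG : MemLp G 2 (ν.map e)) :
    ∫ x, ⟪G x, V x⟫ ∂(ν.map e) = ∫ y, ⟪G (e y), W y⟫ ∂ν := by
  set μ := ν.map e
  have he' : MeasurePreserving e ν μ := he.measurePreserving ν
  let Φ : Lp E 2 μ → ℝ := fun F => ⟪F, hV.toLp V⟫
  let Ψ : Lp E 2 μ → ℝ := fun F => ⟪Lp.compMeasurePreserving e he' F, hW.toLp W⟫
  have hΦ : ∀ (F : Lp E 2 μ) (H : X → E), F =ᵐ[μ] H → Φ F = ∫ x, ⟪H x, V x⟫ ∂μ := by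
    intro F H hFH
    refine (L2.inner_def _ _).trans (integral_congr_ae ?_)
    filter_upwards [hFH, hV.coeFn_toLp] with x hFx hVx
    rw [hFx, hVx]
  have hΨ : ∀ (F : Lp E 2 μ) (H : X → E), F =ᵐ[μ] H → Ψ F = ∫ y, ⟪H (e y), W y⟫ ∂ν := by
    intro F H hFH
    refine (L2.inner_def _ _).trans (integral_congr_ae ?_)
    filter_upwards [Lp.coeFn_compMeasurePreserving F he', he'.quasiMeasurePreserving.ae hFH,
      hW.coeFn_toLp] with y hFy hHy hWy
    rw [hFy, Function.comp_apply, hHy, hWy]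
  have hΦΨ : Φ = Ψ := by
    have hΦc : Continuous Φ := continuous_id.inner continuous_const
    have hΨc : Continuous Ψ :=
      (Lp.compMeasurePreservingₗᵢ ℝ e he').continuous.inner continuous_const
    refine (BoundedContinuousFunction.toLp_denseRange E μ ℝ (p := 2)
      ENNReal.ofNat_ne_top).equalizer hΦc hΨc (funext fun g => ?_)
    have hg := BoundedContinuousFunction.coeFn_toLp 2 μ ℝ g
    rw [Function.comp_apply, Function.comp_apply, hΦ _ _ hg, hΨ _ _ hg]
    exact integral_inner_boundedContinuous_eq_of_forall_integral_smul_eq he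
      (hV.integrable one_le_two) (hW.integrable one_le_two) h g
  rw [← hΦ _ _ hG.coeFn_toLp, ← hΨ _ _ hG.coeFn_toLp, hΦΨ]

lemma integral_norm_comp_sub_sq_eq_add {ν : Measure Y} [IsFiniteMeasure ν]
    {e : Y → X} (he : Measurable e) {U V : X → E} {W : Y → E}
    (hU : MemLp U 2 (ν.map e)) (hV : MemLp V 2 (ν.map e)) (hW : MemLp W 2 ν)
    (h : ∀ f : X →ᵇ ℝ, ∫ x, f x • V x ∂(ν.map e) = ∫ y, f (e y) • W y ∂ν) :
    ∫ y, ‖U (e y) - W y‖ ^ 2 ∂ν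
      = ∫ y, ‖V (e y) - W y‖ ^ 2 ∂ν + ∫ x, ‖U x - V x‖ ^ 2 ∂(ν.map e) := by
  have hcomp : ∀ {F : X → E}, MemLp F 2 (ν.map e) → MemLp (fun y => F (e y)) 2 ν :=
    fun hF => hF.comp_measurePreserving (he.measurePreserving ν)
  have hUV : MemLp (fun x => U x - V x) 2 (ν.map e) := hU.sub hV
  have hres : MemLp (fun y => V (e y) - W y) 2 ν := (hcomp hV).sub hW
  have hcross : ∫ y, ⟪U (e y) - V (e y), V (e y) - W y⟫ ∂ν = 0 := by
    have horth := integral_inner_eq_of_forall_integral_smul_eq he hV hW h hUV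
    rw [integral_map he.aemeasurable (hUV.1.inner hV.1)] at horth
    simp_rw [inner_sub_right]
    rw [integral_sub ((hcomp hUV).integrable_inner (hcomp hV)) ((hcomp hUV).integrable_inner hW)]
    exact sub_eq_zero.mpr horth
  have hsplit : ∀ y, ‖U (e y) - W y‖ ^ 2 = ‖V (e y) - W y‖ ^ 2 + ‖U (e y) - V (e y)‖ ^ 2
      + 2 * ⟪U (e y) - V (e y), V (e y) - W y⟫ := fun y => by
    rw [← sub_add_sub_cancel (U (e y)) (V (e y)) (W y), norm_add_sq_real]; ring
  have hres2 := hres.integrable_norm_pow two_ne_zero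
  have hUV2 := (hcomp hUV).integrable_norm_pow two_ne_zero
  have hsum : Integrable (fun y => ‖V (e y) - W y‖ ^ 2 + ‖U (e y) - V (e y)‖ ^ 2) ν :=
    hres2.add hUV2
  simp_rw [hsplit]
  rw [integral_add hsum (((hcomp hUV).integrable_inner hres).const_mul 2),
    integral_add hres2 hUV2, integral_const_mul, hcross,
    integral_map he.aemeasurable (hUV.integrable_norm_pow two_ne_zero).1]
  ring

end MeasureTheory

open Function

section Glued

variable {T X Y : Type*} [MeasurableSpace T] [MeasurableSpace X] [MeasurableSpace Y]

/-- The measure `μ_t ×_t ρ` on `T × X` glued from `ρ` and the curve `μ_t = (φ t)_# α`. -/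
noncomputable def gluedMeasure (ρ : Measure T) (α : Measure Y) (φ : T → Y → X) : Measure (T × X) :=
  (ρ.prod α).map fun q => (q.1, φ q.1 q.2)

variable {ρ : Measure T} {α : Measure Y} {φ : T → Y → X}

instance [IsFiniteMeasure ρ] [IsFiniteMeasure α] : IsFiniteMeasure (gluedMeasure ρ α φ) := by
  unfold gluedMeasure; infer_instance

lemma lintegral_gluedMeasure [SFinite α] (hφ : Measurable (uncurry φ)) {F : T × X → ENNReal}
    (hF : Measurable F) :
    ∫⁻ z, F z ∂gluedMeasure ρ α φ = ∫⁻ t, ∫⁻ x, F (t, x) ∂(α.map (φ t)) ∂ρ := by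
  have hgraph : Measurable fun q : T × Y => (q.1, φ q.1 q.2) := measurable_fst.prodMk hφ
  have hφt : ∀ t, Measurable (φ t) := fun t => hφ.comp measurable_prodMk_left
  rw [gluedMeasure, lintegral_map hF hgraph,
    lintegral_prod (fun q : T × Y => F (q.1, φ q.1 q.2)) (hF.comp hgraph).aemeasurable]
  exact lintegral_congr fun t => (lintegral_map (hF.comp measurable_prodMk_left) (hφt t)).symm

lemma integral_gluedMeasure {G : Type*} [NormedAddCommGroup G] [NormedSpace ℝ G]
    [SFinite ρ] [SFinite α] (hφ : Measurable (uncurry φ)) {F : T × X → G}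
    (hF : StronglyMeasurable F) (hFi : Integrable F (gluedMeasure ρ α φ)) :
    ∫ z, F z ∂gluedMeasure ρ α φ = ∫ t, ∫ x, F (t, x) ∂(α.map (φ t)) ∂ρ := by
  have hgraph : Measurable fun q : T × Y => (q.1, φ q.1 q.2) := measurable_fst.prodMk hφ
  have hφt : ∀ t, Measurable (φ t) := fun t => hφ.comp measurable_prodMk_left
  rw [gluedMeasure, integral_map hgraph.aemeasurable hF.aestronglyMeasurable,
    integral_prod (fun q : T × Y => F (q.1, φ q.1 q.2))
      ((integrable_map_measure hF.aestronglyMeasurable hgraph.aemeasurable).1 hFi)]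
  exact integral_congr_ae <| ae_of_all _ fun t => (integral_map (hφt t).aemeasurable
    (hF.comp_measurable measurable_prodMk_left).aestronglyMeasurable).symm

lemma integral_smul_gluedMeasure_eq {E : Type*} [NormedAddCommGroup E] [NormedSpace ℝ E]
    [TopologicalSpace T] [TopologicalSpace X]
    [OpensMeasurableSpace (T × X)] [IsFiniteMeasure ρ] [IsFiniteMeasure α]
    (hφ : Measurable (uncurry φ)) {V : T → X → E} {W : Y → E}
    (hVm : StronglyMeasurable (uncurry V))
    (hV : Integrable (uncurry V) (gluedMeasure ρ α φ)) (hW : Integrable W α)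
    (h : ∀ᵐ t ∂ρ, ∀ f : X →ᵇ ℝ, ∫ x, f x • V t x ∂(α.map (φ t)) = ∫ y, f (φ t y) • W y ∂α)
    (f : T × X →ᵇ ℝ) :
    ∫ z, f z • uncurry V z ∂gluedMeasure ρ α φ
      = ∫ q, f (q.1, φ q.1 q.2) • W q.2 ∂(ρ.prod α) := by
  have hfV : Integrable (fun z => f z • uncurry V z) (gluedMeasure ρ α φ) :=
    hV.bdd_smul ‖f‖ f.continuous.aestronglyMeasurable (ae_of_all _ f.norm_coe_le_norm)
  have hfW : Integrable (fun q : T × Y => f (q.1, φ q.1 q.2) • W q.2) (ρ.prod α) :=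
    (hW.comp_snd ρ).bdd_smul ‖f‖
      (f.continuous.measurable.comp (measurable_fst.prodMk hφ)).aestronglyMeasurable
      (ae_of_all _ fun q => f.norm_coe_le_norm _)
  rw [integral_gluedMeasure (F := fun z => f z • uncurry V z) hφ
    (f.continuous.measurable.stronglyMeasurable.smul hVm) hfV, integral_prod _ hfW]
  refine integral_congr_ae (h.mono fun t ht => ?_)
  exact ht (f.compContinuous ⟨fun x => (t, x), by fun_prop⟩)

theorem integral_integral_norm_sub_sq_eq_add [MetricSpace T] [SecondCountableTopology T]
    [BorelSpace T] [MetricSpace X] [SecondCountableTopology X] [BorelSpace X]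
    [IsFiniteMeasure ρ] [IsFiniteMeasure α] {E : Type*} [NormedAddCommGroup E]
    [InnerProductSpace ℝ E] [FiniteDimensional ℝ E] (hφ : Measurable (uncurry φ))
    {u v : T → X → E} {W : Y → E} (hum : StronglyMeasurable (uncurry u))
    (hvm : StronglyMeasurable (uncurry v)) (hu : MemLp (uncurry u) 2 (gluedMeasure ρ α φ))
    (hv : MemLp (uncurry v) 2 (gluedMeasure ρ α φ)) (hW : MemLp W 2 α)
    (h : ∀ᵐ t ∂ρ, ∀ f : X →ᵇ ℝ, ∫ x, f x • v t x ∂(α.map (φ t)) = ∫ y, f (φ t y) • W y ∂α) :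
    ∫ t, ∫ y, ‖u t (φ t y) - W y‖ ^ 2 ∂α ∂ρ
      = ∫ t, ∫ y, ‖v t (φ t y) - W y‖ ^ 2 ∂α ∂ρ
        + ∫ t, ∫ x, ‖u t x - v t x‖ ^ 2 ∂(α.map (φ t)) ∂ρ := by
  have he : Measurable fun q : T × Y => (q.1, φ q.1 q.2) := measurable_fst.prodMk hφ
  have hW' : MemLp (fun q : T × Y => W q.2) 2 (ρ.prod α) := hW.comp_snd ρ
  have hiter : ∀ {w : T → X → E}, MemLp (uncurry w) 2 (gluedMeasure ρ α φ) →
      ∫ t, ∫ y, ‖w t (φ t y) - W y‖ ^ 2 ∂α ∂ρ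
        = ∫ q, ‖uncurry w (q.1, φ q.1 q.2) - W q.2‖ ^ 2 ∂(ρ.prod α) := fun hw =>
    (integral_prod _ (((hw.comp_measurePreserving (he.measurePreserving _)).sub hW'
      ).integrable_norm_pow two_ne_zero)).symm
  have hglued : ∫ t, ∫ x, ‖u t x - v t x‖ ^ 2 ∂(α.map (φ t)) ∂ρ
      = ∫ z, ‖uncurry u z - uncurry v z‖ ^ 2 ∂gluedMeasure ρ α φ :=
    (integral_gluedMeasure hφ ((hum.sub hvm).norm.pow 2)
      ((hu.sub hv).integrable_norm_pow two_ne_zero)).symm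
  rw [hiter hu, hiter hv, hglued]
  exact integral_norm_comp_sub_sq_eq_add he hu hv hW'
    (integral_smul_gluedMeasure_eq hφ hvm (hv.integrable one_le_two)
      (hW.integrable one_le_two) h)

end Glued

theorem stmt8_general {d : ℕ} (μ₀ μ₁ : Measure (EuclideanSpace ℝ (Fin d)))
    (hmom₀ : Integrable (fun x => ‖x‖ ^ 2) μ₀) (hmom₁ : Integrable (fun x => ‖x‖ ^ 2) μ₁)
    (α : Measure (EuclideanSpace ℝ (Fin d) × EuclideanSpace ℝ (Fin d)))
    [IsProbabilityMeasure α]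
    (hα₁ : α.map Prod.fst = μ₀) (hα₂ : α.map Prod.snd = μ₁)
    (v : ℝ → EuclideanSpace ℝ (Fin d) → EuclideanSpace ℝ (Fin d))
    (hvm : Measurable fun q : ℝ × EuclideanSpace ℝ (Fin d) => v q.1 q.2)
    (hvL2 : ∫⁻ t in Set.Ioo (0 : ℝ) 1,
        ∫⁻ x, ENNReal.ofReal (‖v t x‖ ^ 2) ∂(α.map (lineInterp t)) ≠ ⊤)
    (hv : ∀ᵐ t ∂(volume.restrict (Set.Ioo (0 : ℝ) 1)),
      ∀ f : BoundedContinuousFunction (EuclideanSpace ℝ (Fin d)) ℝ,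
        ∫ x, f x • v t x ∂(α.map (lineInterp t))
          = ∫ p, f (lineInterp t p) • (p.2 - p.1) ∂α) :
    ∀ u : ℝ → EuclideanSpace ℝ (Fin d) → EuclideanSpace ℝ (Fin d),
      Measurable (fun q : ℝ × EuclideanSpace ℝ (Fin d) => u q.1 q.2) →
      (∫⁻ t in Set.Ioo (0 : ℝ) 1,
        ∫⁻ x, ENNReal.ofReal (‖u t x‖ ^ 2) ∂(α.map (lineInterp t)) ≠ ⊤) →
      (∫ t in Set.Ioo (0 : ℝ) 1, ∫ p, ‖v t (lineInterp t p) - (p.2 - p.1)‖ ^ 2 ∂α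
          ≤ ∫ t in Set.Ioo (0 : ℝ) 1, ∫ p, ‖u t (lineInterp t p) - (p.2 - p.1)‖ ^ 2 ∂α) ∧
      (∫ t in Set.Ioo (0 : ℝ) 1, ∫ p, ‖u t (lineInterp t p) - (p.2 - p.1)‖ ^ 2 ∂α
          = ∫ t in Set.Ioo (0 : ℝ) 1, ∫ p, ‖v t (lineInterp t p) - (p.2 - p.1)‖ ^ 2 ∂α →
        ∫ t in Set.Ioo (0 : ℝ) 1, ∫ x, ‖u t x - v t x‖ ^ 2 ∂(α.map (lineInterp t)) = 0) := by
  intro u hum huL2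
  set ρ := volume.restrict (Set.Ioo (0 : ℝ) 1)
  have : IsFiniteMeasure ρ := isFiniteMeasure_restrict.2 measure_Ioo_lt_top.ne
  have hφ : Measurable (uncurry (lineInterp (d := d))) := by
    unfold lineInterp; fun_prop
  have hL2 : ∀ w : ℝ → EuclideanSpace ℝ (Fin d) → EuclideanSpace ℝ (Fin d),
      Measurable (uncurry w) →
      ∫⁻ t in Set.Ioo (0 : ℝ) 1, ∫⁻ x, ENNReal.ofReal (‖w t x‖ ^ 2) ∂(α.map (lineInterp t)) ≠ ⊤ →
      MemLp (uncurry w) 2 (gluedMeasure ρ α lineInterp) := fun w hw hw2 =>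
    memLp_two_of_lintegral_ofReal_norm_sq_ne_top hw.aestronglyMeasurable
      ((lintegral_gluedMeasure hφ (hw.norm.pow_const 2).ennreal_ofReal).trans_ne hw2)
  have hW : MemLp (fun p : EuclideanSpace ℝ (Fin d) × EuclideanSpace ℝ (Fin d) => p.2 - p.1) 2 α :=
    (memLp_two_of_map_eq measurable_snd hα₂ hmom₁).sub
      (memLp_two_of_map_eq measurable_fst hα₁ hmom₀)
  have hpyth := integral_integral_norm_sub_sq_eq_add hφ hum.stronglyMeasurable
    hvm.stronglyMeasurable (hL2 u hum huL2) (hL2 v hvm hvL2) hW hv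
  have hgap : 0 ≤ ∫ t in Set.Ioo (0 : ℝ) 1, ∫ x, ‖u t x - v t x‖ ^ 2 ∂(α.map (lineInterp t)) :=
    integral_nonneg fun t => integral_nonneg fun x => by positivity
  exact ⟨by linarith, fun h => by linarith⟩

/-- The velocity field induced by a coupling `α` is the unique minimizer of the flow matching
objective `u ↦ ∫₀¹ ∫ ‖u_t(e_t(x,y)) - (y-x)‖² dα dt` over `L²(μ_t ×_t dt)`. -/
theorem stmt8 {d : ℕ} (μ₀ μ₁ : Measure (EuclideanSpace ℝ (Fin d)))
    [IsProbabilityMeasure μ₀] [IsProbabilityMeasure μ₁]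
    (hmom₀ : Integrable (fun x => ‖x‖ ^ 2) μ₀) (hmom₁ : Integrable (fun x => ‖x‖ ^ 2) μ₁)
    (α : Measure (EuclideanSpace ℝ (Fin d) × EuclideanSpace ℝ (Fin d)))
    [IsProbabilityMeasure α]
    (hα₁ : α.map Prod.fst = μ₀) (hα₂ : α.map Prod.snd = μ₁)
    (v : ℝ → EuclideanSpace ℝ (Fin d) → EuclideanSpace ℝ (Fin d))
    (hvm : Measurable fun q : ℝ × EuclideanSpace ℝ (Fin d) => v q.1 q.2)
    (hvL2 : ∫⁻ t in Set.Ioo (0 : ℝ) 1,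
        ∫⁻ x, ENNReal.ofReal (‖v t x‖ ^ 2) ∂(α.map (lineInterp t)) ≠ ⊤)
    (hv : ∀ᵐ t ∂(volume.restrict (Set.Ioo (0 : ℝ) 1)),
      ∀ f : BoundedContinuousFunction (EuclideanSpace ℝ (Fin d)) ℝ,
        ∫ x, f x • v t x ∂(α.map (lineInterp t))
          = ∫ p, f (lineInterp t p) • (p.2 - p.1) ∂α) :
    ∀ u : ℝ → EuclideanSpace ℝ (Fin d) → EuclideanSpace ℝ (Fin d),
      Measurable (fun q : ℝ × EuclideanSpace ℝ (Fin d) => u q.1 q.2) →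
      (∫⁻ t in Set.Ioo (0 : ℝ) 1,
        ∫⁻ x, ENNReal.ofReal (‖u t x‖ ^ 2) ∂(α.map (lineInterp t)) ≠ ⊤) →
      (∫ t in Set.Ioo (0 : ℝ) 1, ∫ p, ‖v t (lineInterp t p) - (p.2 - p.1)‖ ^ 2 ∂α
          ≤ ∫ t in Set.Ioo (0 : ℝ) 1, ∫ p, ‖u t (lineInterp t p) - (p.2 - p.1)‖ ^ 2 ∂α) ∧
      (∫ t in Set.Ioo (0 : ℝ) 1, ∫ p, ‖u t (lineInterp t p) - (p.2 - p.1)‖ ^ 2 ∂α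
          = ∫ t in Set.Ioo (0 : ℝ) 1, ∫ p, ‖v t (lineInterp t p) - (p.2 - p.1)‖ ^ 2 ∂α →
        ∫ t in Set.Ioo (0 : ℝ) 1, ∫ x, ‖u t x - v t x‖ ^ 2 ∂(α.map (lineInterp t)) = 0) :=
  stmt8_general μ₀ μ₁ hmom₀ hmom₁ α hα₁ hα₂ v hvm hvL2 hv
end

section
/- Let η ∈ 𝒫₂(ℝ^m), μ₀, μ₁ ∈ 𝒫_η(ℝ^m × ℝ^d), and for β > 0 let W_β(μ₀,μ₁)² = min over α ∈ Γ(μ₀,μ₁) of ∫ (‖x₁-x₂‖² + β‖w₁-w₂‖²) dα. If (α_β)_β are optimal plans for W_β(μ₀, μ₁), then ∫ ‖w₁ - w₂‖² dα_β → 0 as β → ∞. -/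
/-!
Since `μ₀` and `μ₁` have the same `w`-marginal, they can be glued along it into a coupling `γ`
with `w₁ = w₂` almost surely; its weighted cost `C = ∫ ‖x₁ - x₂‖² dγ` does not depend on `β`.
Optimality of `α_β` then gives `β ∫ ‖w₁ - w₂‖² dα_β ≤ C`, so the `w`-cost is at most `C / β`.
Finite second moments make every coupling's cost integrable, which is what lets the
optimal cost be split into its two parts.
-/

open MeasureTheory

/-- The set of couplings of two measures. -/
def couplings {E : Type*} [MeasurableSpace E] (μ ν : Measure E) : Set (Measure (E × E)) :=
  {α | IsProbabilityMeasure α ∧ α.map Prod.fst = μ ∧ α.map Prod.snd = ν}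

open ProbabilityTheory Filter Topology

section Gluing

variable {α β γ : Type*} [MeasurableSpace α] [MeasurableSpace β] [MeasurableSpace γ]

lemma MeasureTheory.Measure.map_compProd_prod_fst (μ : Measure α) [SFinite μ]
    (κ : Kernel α β) (η : Kernel α γ) [IsSFiniteKernel κ] [IsMarkovKernel η] :
    (μ ⊗ₘ (κ ×ₖ η)).map (Prod.map id Prod.fst) = μ ⊗ₘ κ := by
  rw [← Measure.compProd_map measurable_fst, ← Kernel.fst_eq, Kernel.fst_prod]

lemma MeasureTheory.Measure.map_compProd_prod_snd (μ : Measure α) [SFinite μ]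
    (κ : Kernel α β) (η : Kernel α γ) [IsMarkovKernel κ] [IsSFiniteKernel η] :
    (μ ⊗ₘ (κ ×ₖ η)).map (Prod.map id Prod.snd) = μ ⊗ₘ η := by
  rw [← Measure.compProd_map measurable_snd, ← Kernel.snd_eq, Kernel.snd_prod]

/-- The witness glues `μ₀` and `μ₁` along their common first marginal, making the second
coordinates conditionally independent given the first. -/
lemma exists_mem_couplings_ae_fst_eq [MeasurableEq α] [StandardBorelSpace β] [Nonempty β]
    (μ₀ μ₁ : Measure (α × β)) [IsProbabilityMeasure μ₀] [IsProbabilityMeasure μ₁]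
    (h : μ₀.fst = μ₁.fst) : ∃ γ ∈ couplings μ₀ μ₁, ∀ᵐ p ∂γ, p.1.1 = p.2.1 := by
  set glue : α × β × β → (α × β) × (α × β) := fun q => ((q.1, q.2.1), (q.1, q.2.2))
  have hglue : Measurable glue := by fun_prop
  set ν := μ₀.fst ⊗ₘ (μ₀.condKernel ×ₖ μ₁.condKernel)
  refine ⟨ν.map glue, ⟨Measure.isProbabilityMeasure_map hglue.aemeasurable, ?_, ?_⟩, ?_⟩
  · rw [Measure.map_map measurable_fst hglue]
    exact (Measure.map_compProd_prod_fst _ _ _).trans (μ₀.disintegrate _)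
  · rw [Measure.map_map measurable_snd hglue]
    exact (Measure.map_compProd_prod_snd _ _ _).trans (h ▸ μ₁.disintegrate _)
  · exact (ae_map_iff hglue.aemeasurable (measurableSet_eq_fun (by fun_prop) (by fun_prop))).mpr
      (ae_of_all _ fun _ => rfl)

end Gluing

section SecondMoments

variable {E : Type*} [NormedAddCommGroup E] [MeasurableSpace E]

lemma memLp_fst_sub_snd_of_mem_couplings {μ ν : Measure E} {π : Measure (E × E)} {p : ENNReal}
    (hπ : π ∈ couplings μ ν) (hμ : MemLp id p μ) (hν : MemLp id p ν) :
    MemLp (fun q : E × E => q.1 - q.2) p π := by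
  obtain ⟨-, hfst, hsnd⟩ := hπ
  have h₁ : MemLp Prod.fst p π := (hfst ▸ hμ).comp_of_map measurable_fst.aemeasurable
  have h₂ : MemLp Prod.snd p π := (hsnd ▸ hν).comp_of_map measurable_snd.aemeasurable
  exact h₁.sub h₂

variable {F : Type*} [NormedAddCommGroup F] [MeasurableSpace F]

lemma memLp_id_two_of_integrable_sq_norm_fst_add_sq_norm_snd {μ : Measure (E × F)}
    (hid : AEStronglyMeasurable id μ) (h : Integrable (fun p => ‖p.1‖ ^ 2 + ‖p.2‖ ^ 2) μ) :
    MemLp id 2 μ := by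
  refine (memLp_two_iff_integrable_sq_norm hid).mpr (h.mono' (hid.norm.pow 2) (ae_of_all _ ?_))
  intro p
  rw [norm_pow, norm_norm, id, Prod.norm_def]
  rcases max_cases ‖p.1‖ ‖p.2‖ with ⟨hmax, -⟩ | ⟨hmax, -⟩ <;> rw [hmax] <;>
    nlinarith [sq_nonneg ‖p.1‖, sq_nonneg ‖p.2‖]

end SecondMoments

lemma tendsto_integral_penalty_atTop {Ω : Type*} [MeasurableSpace Ω] {c g : Ω → ℝ}
    (hc : 0 ≤ c) (hg : 0 ≤ g) {π : ℝ → Measure Ω} {C : ℝ}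
    (hint : ∀ β > 0, Integrable c (π β) ∧ Integrable g (π β))
    (hbound : ∀ β > 0, ∫ ω, (c ω + β * g ω) ∂π β ≤ C) :
    Tendsto (fun β => ∫ ω, g ω ∂π β) atTop (𝓝 0) := by
  have hle : ∀ β > 0, ∫ ω, g ω ∂π β ≤ C / β := by
    intro β hβ
    obtain ⟨hc_int, hg_int⟩ := hint β hβ
    rw [le_div_iff₀' hβ]
    calc β * ∫ ω, g ω ∂π β ≤ ∫ ω, c ω ∂π β + β * ∫ ω, g ω ∂π β :=
          le_add_of_nonneg_left (integral_nonneg hc)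
      _ = ∫ ω, (c ω + β * g ω) ∂π β := by
          rw [integral_add hc_int (hg_int.const_mul β), integral_const_mul]
      _ ≤ C := hbound β hβ
  have hC : Tendsto (fun β : ℝ => C / β) atTop (𝓝 0) := tendsto_const_nhds.div_atTop tendsto_id
  refine tendsto_of_tendsto_of_tendsto_of_le_of_le' tendsto_const_nhds hC
    (Eventually.of_forall fun β => integral_nonneg hg) ?_
  filter_upwards [eventually_gt_atTop 0] with β hβ using hle β hβ

theorem stmt15_general {m d : ℕ} (η : Measure (EuclideanSpace ℝ (Fin m)))
    (μ₀ μ₁ : Measure (EuclideanSpace ℝ (Fin m) × EuclideanSpace ℝ (Fin d)))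
    [IsProbabilityMeasure μ₀] [IsProbabilityMeasure μ₁]
    (hμ₀2 : Integrable (fun p => ‖p.1‖ ^ 2 + ‖p.2‖ ^ 2) μ₀)
    (hμ₁2 : Integrable (fun p => ‖p.1‖ ^ 2 + ‖p.2‖ ^ 2) μ₁)
    (hμ₀m : μ₀.map Prod.fst = η) (hμ₁m : μ₁.map Prod.fst = η)
    (α : ℝ → Measure ((EuclideanSpace ℝ (Fin m) × EuclideanSpace ℝ (Fin d)) ×
      (EuclideanSpace ℝ (Fin m) × EuclideanSpace ℝ (Fin d))))
    (hcoup : ∀ β > (0 : ℝ), α β ∈ couplings μ₀ μ₁)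
    (hopt : ∀ β > (0 : ℝ),
      ∫ p, (‖p.1.2 - p.2.2‖ ^ 2 + β * ‖p.1.1 - p.2.1‖ ^ 2) ∂(α β)
        = sInf ((fun γ => ∫ p, (‖p.1.2 - p.2.2‖ ^ 2 + β * ‖p.1.1 - p.2.1‖ ^ 2) ∂γ) ''
            couplings μ₀ μ₁)) :
    Filter.Tendsto (fun β => ∫ p, ‖p.1.1 - p.2.1‖ ^ 2 ∂(α β)) Filter.atTop (nhds 0) := by
  obtain ⟨γ, hγ, hγ_fst⟩ := exists_mem_couplings_ae_fst_eq μ₀ μ₁ (hμ₀m.trans hμ₁m.symm)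
  have hμ₀ := memLp_id_two_of_integrable_sq_norm_fst_add_sq_norm_snd aestronglyMeasurable_id hμ₀2
  have hμ₁ := memLp_id_two_of_integrable_sq_norm_fst_add_sq_norm_snd aestronglyMeasurable_id hμ₁2
  have hint : ∀ β > (0 : ℝ), Integrable (fun p => ‖p.1.2 - p.2.2‖ ^ 2) (α β) ∧
      Integrable (fun p => ‖p.1.1 - p.2.1‖ ^ 2) (α β) := fun β hβ => by
    have hdiff := memLp_fst_sub_snd_of_mem_couplings (hcoup β hβ) hμ₀ hμ₁
    exact ⟨hdiff.snd.integrable_norm_pow two_ne_zero, hdiff.fst.integrable_norm_pow two_ne_zero⟩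
  have hbound : ∀ β > (0 : ℝ), ∫ p, (‖p.1.2 - p.2.2‖ ^ 2 + β * ‖p.1.1 - p.2.1‖ ^ 2) ∂(α β)
      ≤ ∫ p, ‖p.1.2 - p.2.2‖ ^ 2 ∂γ := fun β hβ => by
    have hcost_bdd : BddBelow ((fun γ => ∫ p, (‖p.1.2 - p.2.2‖ ^ 2 + β * ‖p.1.1 - p.2.1‖ ^ 2) ∂γ)
        '' couplings μ₀ μ₁) :=
      ⟨0, by rintro _ ⟨π, -, rfl⟩; exact integral_nonneg fun _ => by positivity⟩
    rw [hopt β hβ]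
    refine (csInf_le hcost_bdd ⟨γ, hγ, rfl⟩).trans_eq (integral_congr_ae ?_)
    filter_upwards [hγ_fst] with p hp
    simp [hp]
  exact tendsto_integral_penalty_atTop (fun _ => by positivity) (fun _ => by positivity) hint hbound

/-- For optimal plans `α_β` of the weighted cost `‖x₁-x₂‖² + β‖w₁-w₂‖²` between two measures
with common first marginal `η`, the `w`-transport cost `∫ ‖w₁-w₂‖² dα_β` tends to `0` as
`β → ∞`. -/
theorem stmt15 {m d : ℕ} (η : Measure (EuclideanSpace ℝ (Fin m))) [IsProbabilityMeasure η]
    (hη : Integrable (fun w => ‖w‖ ^ 2) η)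
    (μ₀ μ₁ : Measure (EuclideanSpace ℝ (Fin m) × EuclideanSpace ℝ (Fin d)))
    [IsProbabilityMeasure μ₀] [IsProbabilityMeasure μ₁]
    (hμ₀2 : Integrable (fun p => ‖p.1‖ ^ 2 + ‖p.2‖ ^ 2) μ₀)
    (hμ₁2 : Integrable (fun p => ‖p.1‖ ^ 2 + ‖p.2‖ ^ 2) μ₁)
    (hμ₀m : μ₀.map Prod.fst = η) (hμ₁m : μ₁.map Prod.fst = η)
    (α : ℝ → Measure ((EuclideanSpace ℝ (Fin m) × EuclideanSpace ℝ (Fin d)) ×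
      (EuclideanSpace ℝ (Fin m) × EuclideanSpace ℝ (Fin d))))
    (hcoup : ∀ β > (0 : ℝ), α β ∈ couplings μ₀ μ₁)
    (hopt : ∀ β > (0 : ℝ),
      ∫ p, (‖p.1.2 - p.2.2‖ ^ 2 + β * ‖p.1.1 - p.2.1‖ ^ 2) ∂(α β)
        = sInf ((fun γ => ∫ p, (‖p.1.2 - p.2.2‖ ^ 2 + β * ‖p.1.1 - p.2.1‖ ^ 2) ∂γ) ''
            couplings μ₀ μ₁)) :
    Filter.Tendsto (fun β => ∫ p, ‖p.1.1 - p.2.1‖ ^ 2 ∂(α β)) Filter.atTop (nhds 0) :=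
  stmt15_general η μ₀ μ₁ hμ₀2 hμ₁2 hμ₀m hμ₁m α hcoup hopt
end
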